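/- arXiv:2306.00441 — 4 statements merged into one kernel-verified Lean document; each statement's English description precedes it below -/
import Mathlib

section
/- The function φ(s,θ) = (1 + s·e^{-θ})·(cos θ, sin θ) is an injective continuous map (indeed a topological embedding) from [1/2, 1] × [0, ∞) into the region {x ∈ ℝ² : |x| > 1}. -/
/-!
The map has an explicit inverse near its image. The radius `r = 1 + s e^{-θ}` determines
`θ - log s = -log (r - 1)`, and the direction of the point determines `θ` modulo `2π`; since
`log s` ranges over an interval inside `(-π, π)`, these two pieces of data determine `θ`, hence `s`.
The resulting inverse is built from `log` and a rotated `Complex.arg`, so it is continuous at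
every point of the image, which makes `φ` an embedding.
-/

open Real Set

/-- The spiral map φ(s,θ) = (1 + s·e^{-θ})·(cos θ, sin θ). -/
noncomputable def phi : ℝ × ℝ → ℝ × ℝ :=
  fun p => ((1 + p.1 * Real.exp (-p.2)) * Real.cos p.2,
            (1 + p.1 * Real.exp (-p.2)) * Real.sin p.2)

open Topology Complex

theorem Set.LeftInvOn.isEmbedding_domRestrict {X Y : Type*} [TopologicalSpace X]
    [TopologicalSpace Y] {f : X → Y} {g : Y → X} {s : Set X} (hgf : LeftInvOn g f s)
    (hf : ContinuousOn f s) (hg : ContinuousOn g (f '' s)) : IsEmbedding (s.domRestrict f) := by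
  have hF := hf.mapsToRestrict (mapsTo_image f s)
  have hG := hg.mapsToRestrict (hgf.mapsTo (surjOn_image f s))
  have hinv : Function.LeftInverse ((hgf.mapsTo (surjOn_image f s)).restrict g _ _)
      ((mapsTo_image f s).restrict f _ _) := fun x => Subtype.ext (hgf x.2)
  exact IsEmbedding.subtypeVal.comp (hinv.isEmbedding hG hF)

/-- On the image of `phi`, `-log (r - 1) = θ - log s`, and the rotation by that angle moves the
point to argument `log s`; so `θ` is recovered as long as `log s ∈ (-π, π)`. -/
noncomputable def spiralInv (x : ℝ × ℝ) : ℝ × ℝ :=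
  let r := √(x.1 ^ 2 + x.2 ^ 2)
  let θ := -Real.log (r - 1) + arg (equivRealProd.symm x * exp (Real.log (r - 1) * I))
  ((r - 1) * Real.exp θ, θ)

lemma equivRealProd_symm_phi (s θ : ℝ) :
    equivRealProd.symm (phi (s, θ)) = ↑(1 + s * Real.exp (-θ)) * exp (θ * I) := by
  apply Complex.ext <;>
    simp [phi, exp_ofReal_mul_I_re, exp_ofReal_mul_I_im, cos_ofReal_re, sin_ofReal_re] <;> ring

lemma sqrt_phi {s : ℝ} (hs : 0 ≤ s) (θ : ℝ) :
    √((phi (s, θ)).1 ^ 2 + (phi (s, θ)).2 ^ 2) = 1 + s * Real.exp (-θ) := by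
  have h : (phi (s, θ)).1 ^ 2 + (phi (s, θ)).2 ^ 2 = (1 + s * Real.exp (-θ)) ^ 2 := by
    simp only [phi]
    linear_combination (1 + s * Real.exp (-θ)) ^ 2 * Real.cos_sq_add_sin_sq θ
  rw [h, Real.sqrt_sq (by positivity)]

lemma log_mem_Ioo_of_mem_Ioo_exp {s : ℝ} (hs : s ∈ Ioo (Real.exp (-π)) (Real.exp π)) :
    Real.log s ∈ Ioo (-π) π := by
  have hs0 : 0 < s := (Real.exp_pos _).trans hs.1
  exact ⟨(Real.lt_log_iff_exp_lt hs0).2 hs.1, (Real.log_lt_iff_lt_exp hs0).2 hs.2⟩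

lemma equivRealProd_symm_phi_mul_exp {s : ℝ} (hs : 0 < s) (θ : ℝ) :
    equivRealProd.symm (phi (s, θ)) *
        exp (Real.log (√((phi (s, θ)).1 ^ 2 + (phi (s, θ)).2 ^ 2) - 1) * I) =
      ↑(1 + s * Real.exp (-θ)) * exp (Real.log s * I) := by
  rw [sqrt_phi hs.le, add_sub_cancel_left, equivRealProd_symm_phi, mul_assoc, ← Complex.exp_add,
    Real.log_mul hs.ne' (Real.exp_pos _).ne', Real.log_exp]
  congr 3
  push_cast
  ring

lemma arg_equivRealProd_symm_phi_mul_exp {s : ℝ} (hs : s ∈ Ioo (Real.exp (-π)) (Real.exp π))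
    (θ : ℝ) :
    arg (equivRealProd.symm (phi (s, θ)) *
        exp (Real.log (√((phi (s, θ)).1 ^ 2 + (phi (s, θ)).2 ^ 2) - 1) * I)) = Real.log s := by
  have hs0 : 0 < s := (Real.exp_pos _).trans hs.1
  have hlog := log_mem_Ioo_of_mem_Ioo_exp hs
  rw [equivRealProd_symm_phi_mul_exp hs0, arg_real_mul _ (by positivity), arg_exp_mul_I,
    toIocMod_eq_self]
  exact ⟨hlog.1, by linarith [hlog.2]⟩

theorem spiralInv_phi {s : ℝ} (hs : s ∈ Ioo (Real.exp (-π)) (Real.exp π)) (θ : ℝ) :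
    spiralInv (phi (s, θ)) = (s, θ) := by
  have hs0 : 0 < s := (Real.exp_pos _).trans hs.1
  have hθ : -Real.log (s * Real.exp (-θ)) + Real.log s = θ := by
    rw [Real.log_mul hs0.ne' (Real.exp_pos _).ne', Real.log_exp]; ring
  simp only [spiralInv]
  rw [arg_equivRealProd_symm_phi_mul_exp hs, sqrt_phi hs0.le, add_sub_cancel_left, hθ,
    mul_assoc, ← Real.exp_add, neg_add_cancel, Real.exp_zero, mul_one]

theorem continuousAt_spiralInv_phi {s : ℝ} (hs : s ∈ Ioo (Real.exp (-π)) (Real.exp π))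
    (θ : ℝ) : ContinuousAt spiralInv (phi (s, θ)) := by
  have hs0 : 0 < s := (Real.exp_pos _).trans hs.1
  have hz : Continuous equivRealProd.symm := equivRealProdCLM.symm.continuous
  have hr : √((phi (s, θ)).1 ^ 2 + (phi (s, θ)).2 ^ 2) - 1 ≠ 0 := by
    rw [sqrt_phi hs0.le, add_sub_cancel_left]; positivity
  have hL : ContinuousAt (fun x : ℝ × ℝ => Real.log (√(x.1 ^ 2 + x.2 ^ 2) - 1)) (phi (s, θ)) := by
    fun_prop (disch := exact hr)
  have hslit : equivRealProd.symm (phi (s, θ)) *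
      exp (Real.log (√((phi (s, θ)).1 ^ 2 + (phi (s, θ)).2 ^ 2) - 1) * I) ∈ slitPlane := by
    rw [mem_slitPlane_iff_arg, arg_equivRealProd_symm_phi_mul_exp hs,
      equivRealProd_symm_phi_mul_exp hs0]
    exact ⟨(log_mem_Ioo_of_mem_Ioo_exp hs).2.ne,
      mul_ne_zero (ofReal_ne_zero.2 (by positivity)) (exp_ne_zero _)⟩
  have hw : ContinuousAt (fun x : ℝ × ℝ => equivRealProd.symm x *
      exp (Real.log (√(x.1 ^ 2 + x.2 ^ 2) - 1) * I)) (phi (s, θ)) := by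
    fun_prop
  have harg := (continuousAt_arg hslit).comp_of_eq hw rfl
  unfold spiralInv
  dsimp only
  fun_prop

lemma Icc_half_one_subset_Ioo_exp_pi : Icc (1/2 : ℝ) 1 ⊆ Ioo (Real.exp (-π)) (Real.exp π) := by
  have h2 : 2 < Real.exp π := by linarith [Real.add_one_lt_exp pi_ne_zero, pi_gt_three]
  intro s hs
  constructor
  · rw [Real.exp_neg]
    exact lt_of_lt_of_le (by rw [inv_lt_comm₀ (Real.exp_pos π) (by norm_num)]; linarith) hs.1
  · exact hs.2.trans_lt (Real.one_lt_exp_iff.2 pi_pos)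

/-- φ is an injective continuous map, indeed a topological embedding, from
[1/2,1] × [0,∞) into {x ∈ ℝ² : |x| > 1}. -/
theorem stmt_0 :
    Set.MapsTo phi (Set.Icc (1/2 : ℝ) 1 ×ˢ Set.Ici (0 : ℝ))
      {x : ℝ × ℝ | 1 < Real.sqrt (x.1 ^ 2 + x.2 ^ 2)} ∧
    ContinuousOn phi (Set.Icc (1/2 : ℝ) 1 ×ˢ Set.Ici (0 : ℝ)) ∧
    Set.InjOn phi (Set.Icc (1/2 : ℝ) 1 ×ˢ Set.Ici (0 : ℝ)) ∧
    Topology.IsEmbedding ((Set.Icc (1/2 : ℝ) 1 ×ˢ Set.Ici (0 : ℝ)).restrict phi) := by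
  have hs : ∀ p ∈ Icc (1/2 : ℝ) 1 ×ˢ Ici (0 : ℝ), p.1 ∈ Ioo (Real.exp (-π)) (Real.exp π) :=
    fun p hp => Icc_half_one_subset_Ioo_exp_pi hp.1
  have hinv : LeftInvOn spiralInv phi (Icc (1/2 : ℝ) 1 ×ˢ Ici (0 : ℝ)) :=
    fun p hp => spiralInv_phi (hs p hp) p.2
  have hphi : Continuous phi := by unfold phi; fun_prop
  refine ⟨?_, hphi.continuousOn, hinv.injOn, hinv.isEmbedding_domRestrict hphi.continuousOn ?_⟩
  · rintro ⟨s, θ⟩ hp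
    have hs0 : 0 < s := (Real.exp_pos _).trans (hs _ hp).1
    rw [mem_ofPred_eq, sqrt_phi hs0.le]
    exact lt_add_of_pos_right _ (by positivity)
  · rintro _ ⟨⟨s, θ⟩, hp, rfl⟩
    exact (continuousAt_spiralInv_phi (hs _ hp) θ).continuousWithinAt
end

section
/- For fixed ε > 0, the map ψ_ε(θ) = (1 + ε(1/2 + arctan(θ)/π))·(cos θ, sin θ) is injective on ℝ. -/
/-- For ε > 0, the map ψ_ε(θ) = (1 + ε(1/2 + arctan θ / π))·(cos θ, sin θ)
is injective on ℝ. -/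
theorem stmt_3 (ε : ℝ) (hε : 0 < ε) :
    Function.Injective (fun θ : ℝ =>
      (((1 + ε * (1/2 + Real.arctan θ / Real.pi)) * Real.cos θ,
        (1 + ε * (1/2 + Real.arctan θ / Real.pi)) * Real.sin θ) : ℝ × ℝ)) := by
  intro a b h
  simp only [Prod.mk.injEq] at h
  obtain ⟨h1, h2⟩ := h
  set ra := 1 + ε * (1/2 + Real.arctan a / Real.pi) with hra
  set rb := 1 + ε * (1/2 + Real.arctan b / Real.pi) with hrb
  have hpos : ∀ θ : ℝ, 0 < 1 + ε * (1/2 + Real.arctan θ / Real.pi) := by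
    intro θ
    have h1 : -(Real.pi/2) < Real.arctan θ := Real.neg_pi_div_two_lt_arctan θ
    have hπ : 0 < Real.pi := Real.pi_pos
    have : (-(1:ℝ)/2) < Real.arctan θ / Real.pi := by
      rw [div_lt_div_iff₀ (by norm_num) hπ]
      linarith
    nlinarith
  have hrapos : 0 < ra := hpos a
  have hrbpos : 0 < rb := hpos b
  have e1 : ra ^ 2 = (ra * Real.cos a) ^ 2 + (ra * Real.sin a) ^ 2 := by
    have := Real.sin_sq_add_cos_sq a; nlinarith
  have e2 : rb ^ 2 = (rb * Real.cos b) ^ 2 + (rb * Real.sin b) ^ 2 := by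
    have := Real.sin_sq_add_cos_sq b; nlinarith
  have hsq : ra ^ 2 = rb ^ 2 := by rw [e1, e2, h1, h2]
  have hr : ra = rb := by nlinarith
  have hx : 1/2 + Real.arctan a / Real.pi = 1/2 + Real.arctan b / Real.pi :=
    mul_left_cancel₀ hε.ne' (by rw [hra, hrb] at hr; linarith)
  have hd : Real.arctan a / Real.pi = Real.arctan b / Real.pi := by linarith
  exact Real.arctan_injective (by field_simp at hd; exact hd)
end

section
/- Let 0 < r₃ < r₁ and let K = {x + iy ∈ ℂ² : |x| ≤ r₁, |y| = r₃}. Then the polynomially convex hull of K is contained in L = {x + iy : |x| ≤ r₁, |y| ≤ r₃, |x|² − |y|² ≤ r₁² − r₃²}. -/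
/-! Testing the hull against `q - c` shows that each polynomial `q` maps the hull into every
closed disc containing `q(K)`. If `|q| ≤ R` and `Re q ≤ M` on `K`, the discs of radius
`√(t² + R²)` centred at `M - t` contain `q(K)` and shrink to the half-plane `Re ≤ M` as `t → ∞`,
so the hull also satisfies `Re q ≤ M`. For `q = z₁² + z₂²` this is `|x|² − |y|² ≤ r₁² − r₃²`.
For the linear form `q = -i⟨y₀, z⟩` with `y₀` the imaginary part of a hull point, `Re q` is
`⟨y₀, y⟩ ≤ (|y₀|² + r₃²) / 2` on `K`, and evaluating at the point itself gives `|y₀| ≤ r₃`.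
Adding the two inequalities bounds `|x|`. -/

/-- The polynomially convex hull of a compact set K ⊂ ℂ²:
all points z with |p(z)| ≤ sup_K |p| for every holomorphic polynomial p. -/
noncomputable def polyHull (K : Set (ℂ × ℂ)) : Set (ℂ × ℂ) :=
  {z | ∀ p : MvPolynomial (Fin 2) ℂ,
    ‖MvPolynomial.eval ![z.1, z.2] p‖ ≤
      sSup ((fun w : ℂ × ℂ => ‖MvPolynomial.eval ![w.1, w.2] p‖) '' K)}

open MvPolynomial Bornology

namespace Complex

theorem norm_sub_le_sqrt_of_re_le {b : ℂ} {R M t : ℝ} (hR : ‖b‖ ≤ R) (hM : b.re ≤ M)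
    (ht : M + R ≤ t) : ‖b - (M - t : ℝ)‖ ≤ √(t ^ 2 + R ^ 2) := by
  rw [norm_def]
  refine Real.sqrt_le_sqrt ?_
  have hre := abs_le.mp ((abs_re_le_norm b).trans hR)
  have him := abs_le.mp ((abs_im_le_norm b).trans hR)
  simp only [normSq_apply, sub_re, sub_im, ofReal_re, ofReal_im, sub_zero]
  nlinarith

theorem re_le_of_forall_norm_sub_le_sqrt {a : ℂ} {M R t₀ : ℝ}
    (h : ∀ t ≥ t₀, ‖a - (M - t : ℝ)‖ ≤ √(t ^ 2 + R ^ 2)) : a.re ≤ M := by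
  by_contra! hMa
  set t := max (max t₀ 0) (R ^ 2 / (a.re - M))
  have ht₀ : t₀ ≤ t := le_max_of_le_left (le_max_left _ _)
  have ht : 0 ≤ t := le_max_of_le_left (le_max_right _ _)
  have hRt : R ^ 2 ≤ t * (a.re - M) :=
    (div_le_iff₀ (sub_pos.mpr hMa)).mp (le_max_right _ _)
  have hre : a.re - M + t ≤ √(t ^ 2 + R ^ 2) := by
    have := re_le_norm (a - (M - t : ℝ))
    simp only [sub_re, ofReal_re] at this
    linarith [h t ht₀]
  rw [Real.le_sqrt (by linarith) (by positivity)] at hre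
  nlinarith

end Complex

section polyHull

variable {K : Set (ℂ × ℂ)} {z : ℂ × ℂ}

theorem norm_eval_le_of_mem_polyHull (hz : z ∈ polyHull K) {p : MvPolynomial (Fin 2) ℂ}
    {C : ℝ} (hC : ∀ w ∈ K, ‖eval ![w.1, w.2] p‖ ≤ C) : ‖eval ![z.1, z.2] p‖ ≤ C := by
  rcases K.eq_empty_or_nonempty with rfl | hK
  · exact absurd (hz 1) (by simp)
  · exact (hz p).trans (csSup_le (hK.image _) (Set.forall_mem_image.mpr hC))

theorem Bornology.IsBounded.exists_norm_eval_le (hK : IsBounded K) (p : MvPolynomial (Fin 2) ℂ) :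
    ∃ R, ∀ w ∈ K, ‖eval ![w.1, w.2] p‖ ≤ R := by
  obtain ⟨R, hR⟩ := hK.isCompact_closure.exists_bound_of_continuousOn
    (f := fun w : ℂ × ℂ => eval ![w.1, w.2] p) ((continuous_eval p).comp (by fun_prop)).continuousOn
  exact ⟨R, fun w hw => hR w (subset_closure hw)⟩

theorem re_eval_le_of_mem_polyHull (hK : IsBounded K) (hz : z ∈ polyHull K)
    {q : MvPolynomial (Fin 2) ℂ} {M : ℝ} (hM : ∀ w ∈ K, (eval ![w.1, w.2] q).re ≤ M) :
    (eval ![z.1, z.2] q).re ≤ M := by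
  obtain ⟨R, hR⟩ := hK.exists_norm_eval_le q
  refine Complex.re_le_of_forall_norm_sub_le_sqrt (R := R) (t₀ := M + R) fun t ht => ?_
  have hdisc := norm_eval_le_of_mem_polyHull hz (p := q - C ((M - t : ℝ) : ℂ)) fun w hw => by
    simpa only [map_sub, eval_C] using Complex.norm_sub_le_sqrt_of_re_le (hR w hw) (hM w hw) ht
  simpa only [map_sub, eval_C] using hdisc

end polyHull

theorem isBounded_setOf_sum_sq_re_le_and_sum_sq_im_le (a b : ℝ) :
    IsBounded {z : ℂ × ℂ | z.1.re ^ 2 + z.2.re ^ 2 ≤ a ^ 2 ∧ z.1.im ^ 2 + z.2.im ^ 2 ≤ b ^ 2} := by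
  refine (Metric.isBounded_iff_subset_closedBall 0).mpr ⟨|a| + |b|, fun z ⟨hre, him⟩ => ?_⟩
  have hcoord {u v c : ℝ} (h : u ^ 2 + v ^ 2 ≤ c ^ 2) : |u| ≤ |c| ∧ |v| ≤ |c| :=
    ⟨sq_le_sq.mp (by nlinarith), sq_le_sq.mp (by nlinarith)⟩
  obtain ⟨hre₁, hre₂⟩ := hcoord hre
  obtain ⟨him₁, him₂⟩ := hcoord him
  rw [Metric.mem_closedBall, dist_zero_right, norm_prod_le_iff]
  exact ⟨(Complex.norm_le_abs_re_add_abs_im _).trans (add_le_add hre₁ him₁),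
    (Complex.norm_le_abs_re_add_abs_im _).trans (add_le_add hre₂ him₂)⟩

theorem re_eval_X_zero_sq_add_X_one_sq (w : ℂ × ℂ) :
    (eval ![w.1, w.2] (X 0 ^ 2 + X 1 ^ 2 : MvPolynomial (Fin 2) ℂ)).re =
      (w.1.re ^ 2 + w.2.re ^ 2) - (w.1.im ^ 2 + w.2.im ^ 2) := by
  simp [sq, Complex.mul_re]
  ring

theorem re_eval_neg_I_mul_linear (a b : ℝ) (w : ℂ × ℂ) :
    (eval ![w.1, w.2] (C (-Complex.I) * (C (a : ℂ) * X 0 + C (b : ℂ) * X 1))).re =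
      a * w.1.im + b * w.2.im := by
  simp

theorem stmt_10_general (r₁ r₃ : ℝ) :
    polyHull {z : ℂ × ℂ | z.1.re ^ 2 + z.2.re ^ 2 ≤ r₁ ^ 2 ∧
        z.1.im ^ 2 + z.2.im ^ 2 = r₃ ^ 2} ⊆
      {z : ℂ × ℂ | z.1.re ^ 2 + z.2.re ^ 2 ≤ r₁ ^ 2 ∧
        z.1.im ^ 2 + z.2.im ^ 2 ≤ r₃ ^ 2 ∧
        (z.1.re ^ 2 + z.2.re ^ 2) - (z.1.im ^ 2 + z.2.im ^ 2) ≤ r₁ ^ 2 - r₃ ^ 2} := by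
  intro z hz
  have hK := (isBounded_setOf_sum_sq_re_le_and_sum_sq_im_le r₁ r₃).subset
    fun w (hw : _ ∧ _ = _) => ⟨hw.1, hw.2.le⟩
  have hsq := re_eval_le_of_mem_polyHull hK hz (q := X 0 ^ 2 + X 1 ^ 2)
    (M := r₁ ^ 2 - r₃ ^ 2) fun w ⟨hre, him⟩ => by
      rw [re_eval_X_zero_sq_add_X_one_sq]
      linarith
  have hlin := re_eval_le_of_mem_polyHull hK hz
    (q := C (-Complex.I) * (C (z.1.im : ℂ) * X 0 + C (z.2.im : ℂ) * X 1))
    (M := (z.1.im ^ 2 + z.2.im ^ 2 + r₃ ^ 2) / 2) fun w ⟨_, him⟩ => by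
      rw [re_eval_neg_I_mul_linear]
      nlinarith [sq_nonneg (z.1.im - w.1.im), sq_nonneg (z.2.im - w.2.im)]
  rw [re_eval_X_zero_sq_add_X_one_sq] at hsq
  rw [re_eval_neg_I_mul_linear] at hlin
  exact ⟨by nlinarith, by nlinarith, hsq⟩

/-- For 0 < r₃ < r₁ and K = {|x| ≤ r₁, |y| = r₃}, the polynomial hull of K is
contained in L = {|x| ≤ r₁, |y| ≤ r₃, |x|² − |y|² ≤ r₁² − r₃²}. -/
theorem stmt_10 (r₁ r₃ : ℝ) (h₃ : 0 < r₃) (h₁₃ : r₃ < r₁) :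
    polyHull {z : ℂ × ℂ | z.1.re ^ 2 + z.2.re ^ 2 ≤ r₁ ^ 2 ∧
        z.1.im ^ 2 + z.2.im ^ 2 = r₃ ^ 2} ⊆
      {z : ℂ × ℂ | z.1.re ^ 2 + z.2.re ^ 2 ≤ r₁ ^ 2 ∧
        z.1.im ^ 2 + z.2.im ^ 2 ≤ r₃ ^ 2 ∧
        (z.1.re ^ 2 + z.2.re ^ 2) - (z.1.im ^ 2 + z.2.im ^ 2) ≤ r₁ ^ 2 - r₃ ^ 2} :=
  stmt_10_general r₁ r₃
end

section
/- Let a, b ∈ ℂ with the ℝ-linear map T : ℝ² → ℂ, T(x₁, x₂) = a x₁ + b x₂, injective. Then for any continuous branch F of log(a z₁ + b z₂) defined near the punctured circle {(cos θ, sin θ) : 0 < θ < 2π} ⊂ ℝ² ⊂ ℂ², the limits of F at θ → 0⁺ and θ → 2π⁻ differ by exactly ±2πi. -/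
/-!
On the unit circle, a cos θ + b sin θ = p e^{iθ} + q e^{-iθ} with p = (a - ib)/2 and
q = (a + ib)/2, and injectivity of (x₁, x₂) ↦ a x₁ + b x₂ is exactly ‖p‖ ≠ ‖q‖. If ‖q‖ < ‖p‖,
then log p + iθ + log(1 + (q/p) e^{-2iθ}) is a continuous logarithm on all of ℝ (the argument
of the last log stays in the right half-plane) gaining 2πi per turn; if ‖p‖ < ‖q‖, exchanging
p and q and reversing θ gives one gaining -2πi. On the connected arc any continuous branch F
differs from it by a constant of 2πiℤ, so the endpoint limits of F exist and differ by ±2πi.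
-/

open Real Filter Topology

open Complex (I slitPlane)

noncomputable def circleLog (p q : ℂ) (θ : ℝ) : ℂ :=
  Complex.log p + θ * I + Complex.log (1 + q / p * Complex.exp (-(2 * θ * I)))

section CircleLog

variable {p q : ℂ}

lemma one_add_mem_slitPlane_of_norm_lt (h : ‖q‖ < ‖p‖) (θ : ℝ) :
    1 + q / p * Complex.exp (-(2 * θ * I)) ∈ slitPlane := by
  have hp : 0 < ‖p‖ := (norm_nonneg q).trans_lt h
  refine Complex.mem_slitPlane_of_norm_lt_one ?_
  simpa [norm_mul, norm_div, Complex.norm_exp, div_lt_one hp] using h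

lemma continuous_circleLog (h : ‖q‖ < ‖p‖) : Continuous (circleLog p q) :=
  continuous_const.add (by fun_prop) |>.add <|
    continuous_iff_continuousAt.2 fun θ ↦
      (by fun_prop : Continuous _).continuousAt.clog (one_add_mem_slitPlane_of_norm_lt h θ)

lemma exp_circleLog (h : ‖q‖ < ‖p‖) (θ : ℝ) :
    Complex.exp (circleLog p q θ) = p * Complex.exp (θ * I) + q * Complex.exp (-(θ * I)) := by
  have hp : p ≠ 0 := norm_pos_iff.1 ((norm_nonneg q).trans_lt h)
  rw [circleLog, Complex.exp_add, Complex.exp_add, Complex.exp_log hp,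
    Complex.exp_log (Complex.slitPlane_ne_zero (one_add_mem_slitPlane_of_norm_lt h θ))]
  have hθ : Complex.exp (θ * I) * Complex.exp (-(2 * θ * I)) = Complex.exp (-(θ * I)) := by
    rw [← Complex.exp_add]; ring_nf
  rw [← hθ]
  field_simp

lemma circleLog_add_two_pi (p q : ℂ) (θ : ℝ) :
    circleLog p q (θ + 2 * π) = circleLog p q θ + 2 * π * I := by
  have hθ : -(2 * ((θ + 2 * π : ℝ) : ℂ) * I) = -(2 * θ * I) + (-2 : ℤ) * (2 * π * I) := by
    push_cast; ring
  rw [circleLog, circleLog, hθ, Complex.exp_add, Complex.exp_int_mul_two_pi_mul_I, mul_one]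
  push_cast
  ring

end CircleLog

lemma IsPreconnected.exists_eq_add_of_exp_eq {α : Type*} [TopologicalSpace α] {s : Set α}
    (hs : IsPreconnected s) {f g : α → ℂ} (hf : ContinuousOn f s) (hg : ContinuousOn g s)
    (hfg : ∀ x ∈ s, Complex.exp (f x) = Complex.exp (g x)) : ∃ c, ∀ x ∈ s, f x = g x + c := by
  rcases s.eq_empty_or_nonempty with rfl | ⟨x₀, hx₀⟩
  · simp
  have hdiscrete : IsDiscrete (AddSubgroup.zmultiples (2 * π * I) : Set ℂ) :=
    isDiscrete_iff_discreteTopology.2 (NormedSpace.discreteTopology_zmultiples _)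
  have hmaps : Set.MapsTo (f - g) s (AddSubgroup.zmultiples (2 * π * I)) := fun x hx ↦ by
    obtain ⟨n, hn⟩ := Complex.exp_eq_exp_iff_exists_int.1 (hfg x hx)
    exact ⟨n, by simp [hn]⟩
  refine ⟨f x₀ - g x₀, fun x hx ↦ ?_⟩
  have := hs.constant_of_mapsTo hdiscrete (hf.sub hg) hmaps hx hx₀
  simp only [Pi.sub_apply] at this
  linear_combination this

lemma exists_tendsto_of_exp_eq {x y : ℝ} (hxy : x < y) {f L : ℝ → ℂ}
    (hf : ContinuousOn f (Set.Ioo x y)) (hL : Continuous L)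
    (hfL : ∀ θ ∈ Set.Ioo x y, Complex.exp (f θ) = Complex.exp (L θ)) :
    ∃ c, Tendsto f (𝓝[>] x) (𝓝 (L x + c)) ∧ Tendsto f (𝓝[<] y) (𝓝 (L y + c)) := by
  obtain ⟨c, hc⟩ := isPreconnected_Ioo.exists_eq_add_of_exp_eq hf hL.continuousOn hfL
  have hlim (z : ℝ) {l : Filter ℝ} (hl : l ≤ 𝓝 z) (hs : Set.Ioo x y ∈ l) :
      Tendsto f l (𝓝 (L z + c)) :=
    ((hL.tendsto z).mono_left hl |>.add_const c).congr' <|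
      Filter.mem_of_superset hs fun θ hθ ↦ (hc θ hθ).symm
  exact ⟨c, hlim x nhdsWithin_le_nhds (Ioo_mem_nhdsGT hxy),
    hlim y nhdsWithin_le_nhds (Ioo_mem_nhdsLT hxy)⟩

lemma cos_sin_eq_exp (a b : ℂ) (θ : ℝ) :
    a * Real.cos θ + b * Real.sin θ =
      (a - I * b) / 2 * Complex.exp (θ * I) + (a + I * b) / 2 * Complex.exp (-(θ * I)) := by
  rw [← neg_mul, Complex.exp_mul_I, Complex.exp_mul_I, Complex.cos_neg, Complex.sin_neg,
    Complex.ofReal_cos, Complex.ofReal_sin]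
  linear_combination (b * Complex.sin θ) * Complex.I_mul_I

lemma norm_ne_of_injective {a b : ℂ}
    (hab : ∀ x₁ x₂ : ℝ, a * x₁ + b * x₂ = 0 → x₁ = 0 ∧ x₂ = 0) :
    ‖(a - I * b) / 2‖ ≠ ‖(a + I * b) / 2‖ := by
  intro h
  have him : (a * (starRingEnd ℂ) b).im = 0 := by
    rw [← sq_eq_sq₀ (norm_nonneg _) (norm_nonneg _), Complex.sq_norm, Complex.sq_norm] at h
    simp only [map_div₀, Complex.normSq_ofNat, Complex.normSq_apply, Complex.add_re,
      Complex.add_im, Complex.sub_re, Complex.sub_im, Complex.mul_re, Complex.mul_im,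
      Complex.I_re, Complex.I_im, Complex.conj_re, Complex.conj_im] at h ⊢
    linarith
  by_cases hb : b = 0
  · simpa using hab 0 1 (by simp [hb])
  · refine hb (Complex.normSq_eq_zero.1 (hab (Complex.normSq b) (-(a * (starRingEnd ℂ) b).re) ?_).1)
    have hre : (((a * (starRingEnd ℂ) b).re : ℝ) : ℂ) = a * (starRingEnd ℂ) b :=
      Complex.ext rfl (by simp [him])
    rw [Complex.ofReal_neg, hre, ← Complex.mul_conj]
    ring

lemma exists_continuous_log_of_norm_ne {p q : ℂ} (h : ‖p‖ ≠ ‖q‖) :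
    ∃ L : ℝ → ℂ, Continuous L ∧
      (∀ θ : ℝ, Complex.exp (L θ) = p * Complex.exp (θ * I) + q * Complex.exp (-(θ * I))) ∧
      (L (2 * π) - L 0 = 2 * π * I ∨ L (2 * π) - L 0 = -(2 * π * I)) := by
  rcases h.lt_or_gt with hpq | hqp
  · refine ⟨fun θ ↦ circleLog q p (-θ), (continuous_circleLog hpq).comp continuous_neg,
      fun θ ↦ ?_, Or.inr ?_⟩
    · rw [exp_circleLog hpq, Complex.ofReal_neg, neg_mul, neg_neg, add_comm]
    · have := circleLog_add_two_pi q p (-(2 * π))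
      rw [neg_add_cancel] at this
      simp only [neg_zero]
      linear_combination -this
  · refine ⟨circleLog p q, continuous_circleLog hqp, exp_circleLog hqp, Or.inl ?_⟩
    rw [← zero_add (2 * π), circleLog_add_two_pi, add_sub_cancel_left]

lemma exists_continuous_log_cos_sin {a b : ℂ}
    (hab : ∀ x₁ x₂ : ℝ, a * x₁ + b * x₂ = 0 → x₁ = 0 ∧ x₂ = 0) :
    ∃ L : ℝ → ℂ, Continuous L ∧
      (∀ θ : ℝ, Complex.exp (L θ) = a * Real.cos θ + b * Real.sin θ) ∧
      (L (2 * π) - L 0 = 2 * π * I ∨ L (2 * π) - L 0 = -(2 * π * I)) := by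
  simp_rw [cos_sin_eq_exp a b]
  exact exists_continuous_log_of_norm_ne (norm_ne_of_injective hab)

theorem stmt_18_general (a b : ℂ)
    (htrans : ∀ x₁ x₂ : ℝ, a * x₁ + b * x₂ = 0 → x₁ = 0 ∧ x₂ = 0)
    (U : Set (ℂ × ℂ))
    (harc : ∀ θ ∈ Set.Ioo (0 : ℝ) (2 * π),
      (((Real.cos θ : ℂ), (Real.sin θ : ℂ)) : ℂ × ℂ) ∈ U)
    (F : ℂ × ℂ → ℂ) (hF : ContinuousOn F U)
    (hbr : ∀ z ∈ U, Complex.exp (F z) = a * z.1 + b * z.2) :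
    ∃ l₁ l₂ : ℂ,
      Tendsto (fun θ : ℝ => F ((Real.cos θ : ℂ), (Real.sin θ : ℂ))) (𝓝[>] 0) (𝓝 l₁) ∧
      Tendsto (fun θ : ℝ => F ((Real.cos θ : ℂ), (Real.sin θ : ℂ))) (𝓝[<] (2 * π)) (𝓝 l₂) ∧
      (l₂ - l₁ = 2 * π * Complex.I ∨ l₂ - l₁ = -(2 * π * Complex.I)) := by
  obtain ⟨L, hLc, hLexp, hLjump⟩ := exists_continuous_log_cos_sin htrans
  have hFarc : ContinuousOn (fun θ : ℝ => F ((Real.cos θ : ℂ), (Real.sin θ : ℂ)))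
      (Set.Ioo 0 (2 * π)) :=
    hF.comp (by fun_prop) harc
  obtain ⟨c, h₀, h₂π⟩ := exists_tendsto_of_exp_eq two_pi_pos hFarc hLc
    fun θ hθ ↦ (hbr _ (harc θ hθ)).trans (hLexp θ).symm
  exact ⟨_, _, h₀, h₂π, by simpa using hLjump⟩

/-- Let T(x₁,x₂) = a x₁ + b x₂ be injective ℝ² → ℂ, and let F be a continuous branch
of log(a z₁ + b z₂) on a simply connected open neighbourhood U ⊂ ℂ² of the punctured
circle {(cos θ, sin θ) : 0 < θ < 2π} avoiding {a z₁ + b z₂ = 0}. Then the limits of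
F along the circle at θ → 0⁺ and θ → 2π⁻ exist and differ by exactly ±2πi. -/
theorem stmt_18 (a b : ℂ)
    (htrans : ∀ x₁ x₂ : ℝ, a * x₁ + b * x₂ = 0 → x₁ = 0 ∧ x₂ = 0)
    (U : Set (ℂ × ℂ)) (hO : IsOpen U) (hconn : IsConnected U)
    (hsc : SimplyConnectedSpace U)
    (harc : ∀ θ ∈ Set.Ioo (0 : ℝ) (2 * π),
      (((Real.cos θ : ℂ), (Real.sin θ : ℂ)) : ℂ × ℂ) ∈ U)
    (hL : ∀ z ∈ U, a * z.1 + b * z.2 ≠ 0)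
    (F : ℂ × ℂ → ℂ) (hF : ContinuousOn F U)
    (hbr : ∀ z ∈ U, Complex.exp (F z) = a * z.1 + b * z.2) :
    ∃ l₁ l₂ : ℂ,
      Tendsto (fun θ : ℝ => F ((Real.cos θ : ℂ), (Real.sin θ : ℂ))) (𝓝[>] 0) (𝓝 l₁) ∧
      Tendsto (fun θ : ℝ => F ((Real.cos θ : ℂ), (Real.sin θ : ℂ))) (𝓝[<] (2 * π)) (𝓝 l₂) ∧
      (l₂ - l₁ = 2 * π * Complex.I ∨ l₂ - l₁ = -(2 * π * Complex.I)) :=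
  stmt_18_general a b htrans U harc F hF hbr
end
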